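/- Let k be a field of characteristic not equal to 2, (A,·) an associative k-algebra, (R,∘,ℓ,r) an A-bimodule k-algebra, δ₊, δ₋ : R → A linear maps, and λ ∈ k. Set α = (δ₊+δ₋)/2 and β = (δ₊−δ₋)/2. Suppose ℓ(β(u))v = u r(β(v)) for all u, v ∈ R. Then the operation u⋄v := ℓ(δ₊(u))v + u r(δ₋(v)) + λ u∘v defines an associative product on R if and only if ℓ(α(u)·α(v) − α(u *_α v))w = u r(α(v)·α(w) − α(v *_α w)) for all u, v, w ∈ R, where u *_α v = ℓ(α(u))v + u r(α(v)) + λ u∘v. -/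

import Mathlib

/-! Write `u ⋆ v = ℓ(a)v + u r(b) + λ u∘v` for the product twisted by `a, b ∈ A`. The bimodule
and bimodule-algebra axioms make all the `λ`-terms of the associator of two such products cancel,
leaving `u r(b·c − q) − ℓ(a·b − p)w` when the outer products carry the twists `p` and `q`. Hence
`u *_α v` is associative exactly when the stated compatibility holds, and the hypothesis on `β`
says precisely that `u⋄v = u *_α v`, since `δ₊ = α + β` and `δ₋ = α − β`. -/

section TwistedProduct

variable {k A R : Type*} [Field k]
    [NonUnitalRing A] [Module k A]
    [NonUnitalRing R] [Module k R] [SMulCommClass k R R] [IsScalarTower k R R]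
    (ℓ r : A →ₗ[k] R →ₗ[k] R) (lam : k)

def twistedMul (a b : A) (u v : R) : R :=
  ℓ a v + r b u + lam • (u * v)

variable {ℓ r}

theorem twistedMul_assoc_sub
    (hbim1 : ∀ (x y : A) (v : R), ℓ (x * y) v = ℓ x (ℓ y v))
    (hbim2 : ∀ (x y : A) (v : R), r y (r x v) = r (x * y) v)
    (hbim3 : ∀ (x y : A) (v : R), r y (ℓ x v) = ℓ x (r y v))
    (halg1 : ∀ (x : A) (v w : R), ℓ x (v * w) = (ℓ x v) * w)
    (halg2 : ∀ (x : A) (v w : R), r x (v * w) = v * (r x w))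
    (halg3 : ∀ (x : A) (v w : R), (r x v) * w = v * (ℓ x w))
    (a b c p q : A) (u v w : R) :
    twistedMul ℓ r lam p c (twistedMul ℓ r lam a b u v) w
        - twistedMul ℓ r lam a q u (twistedMul ℓ r lam b c v w)
      = r (b * c - q) u - ℓ (a * b - p) w := by
  simp only [twistedMul, map_add, map_smul, map_sub, LinearMap.sub_apply,
    add_mul, mul_add, smul_add, smul_mul_assoc, mul_smul_comm,
    hbim2, hbim3, halg2, halg3, ← hbim1, ← halg1, mul_assoc]
  abel

theorem twistedMul_assoc_iff
    (hbim1 : ∀ (x y : A) (v : R), ℓ (x * y) v = ℓ x (ℓ y v))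
    (hbim2 : ∀ (x y : A) (v : R), r y (r x v) = r (x * y) v)
    (hbim3 : ∀ (x y : A) (v : R), r y (ℓ x v) = ℓ x (r y v))
    (halg1 : ∀ (x : A) (v w : R), ℓ x (v * w) = (ℓ x v) * w)
    (halg2 : ∀ (x : A) (v w : R), r x (v * w) = v * (r x w))
    (halg3 : ∀ (x : A) (v w : R), (r x v) * w = v * (ℓ x w))
    (α : R → A) :
    let star : R → R → R := fun u v => twistedMul ℓ r lam (α u) (α v) u v
    (∀ u v w : R, star (star u v) w = star u (star v w)) ↔
      ∀ u v w : R, ℓ (α u * α v - α (star u v)) w = r (α v * α w - α (star v w)) u := by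
  intro star
  refine forall₃_congr fun u v w => ?_
  have hsub : star (star u v) w - star u (star v w)
      = r (α v * α w - α (star v w)) u - ℓ (α u * α v - α (star u v)) w :=
    twistedMul_assoc_sub lam hbim1 hbim2 hbim3 halg1 halg2 halg3
      (α u) (α v) (α w) (α (star u v)) (α (star v w)) u v w
  rw [← sub_eq_zero, hsub, sub_eq_zero, eq_comm]

end TwistedProduct

theorem apply_add_apply_eq_of_halfDiff_balanced {k A R : Type*} [Field k] (hchar : (2 : k) ≠ 0)
    [AddCommGroup A] [Module k A] [AddCommGroup R] [Module k R]
    (ℓ r : A →ₗ[k] R →ₗ[k] R) (δp δm : R →ₗ[k] A)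
    (hβ : ∀ u v : R, ℓ ((2 : k)⁻¹ • (δp u - δm u)) v = r ((2 : k)⁻¹ • (δp v - δm v)) u)
    (u v : R) :
    ℓ (δp u) v + r (δm v) u
      = ℓ ((2 : k)⁻¹ • (δp u + δm u)) v + r ((2 : k)⁻¹ • (δp v + δm v)) u := by
  have h := hβ u v
  simp only [map_smul, map_sub, map_add, LinearMap.smul_apply, LinearMap.sub_apply,
    LinearMap.add_apply] at h ⊢
  linear_combination (norm := match_scalars) h <;> field_simp <;> ring

theorem stmt4 {k A R : Type} [Field k] (hchar : (2 : k) ≠ 0)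
    [NonUnitalRing A] [Module k A]
    [NonUnitalRing R] [Module k R] [SMulCommClass k R R] [IsScalarTower k R R]
    (ℓ r : A →ₗ[k] R →ₗ[k] R)
    (hbim1 : ∀ (x y : A) (v : R), ℓ (x * y) v = ℓ x (ℓ y v))
    (hbim2 : ∀ (x y : A) (v : R), r y (r x v) = r (x * y) v)
    (hbim3 : ∀ (x y : A) (v : R), r y (ℓ x v) = ℓ x (r y v))
    (halg1 : ∀ (x : A) (v w : R), ℓ x (v * w) = (ℓ x v) * w)
    (halg2 : ∀ (x : A) (v w : R), r x (v * w) = v * (r x w))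
    (halg3 : ∀ (x : A) (v w : R), (r x v) * w = v * (ℓ x w))
    (δp δm : R →ₗ[k] A) (lam : k) :
    let α : R → A := fun u => (2 : k)⁻¹ • (δp u + δm u)
    let β : R → A := fun u => (2 : k)⁻¹ • (δp u - δm u)
    (∀ u v : R, ℓ (β u) v = r (β v) u) →
      (let diam : R → R → R := fun u v => ℓ (δp u) v + r (δm v) u + lam • (u * v)
       let star : R → R → R := fun u v => ℓ (α u) v + r (α v) u + lam • (u * v)
       (∀ u v w : R, diam (diam u v) w = diam u (diam v w)) ↔
         (∀ u v w : R,
           ℓ (α u * α v - α (star u v)) w = r (α v * α w - α (star v w)) u)) := by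
  intro α β hβ diam star
  have hdiam : diam = fun u v => twistedMul ℓ r lam (α u) (α v) u v := by
    funext u v
    simp only [diam, twistedMul, apply_add_apply_eq_of_halfDiff_balanced hchar ℓ r δp δm hβ u v]
    rfl
  rw [hdiam]
  exact twistedMul_assoc_iff lam hbim1 hbim2 hbim3 halg1 halg2 halg3 α
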